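/- Fix α ∈ (0,1), σ_Z ≥ 0 and k > 0 (k represents the fixed ratio τ_Q/σ_β). For β ∈ (0,1) write σ_β = √(β² + (1−β)²) and c(β) = αβ + (1−α)(1−β), and let σ_α = √(α² + (1−α)² + σ_Z²). Then the mean admitted type T(β) = (α/σ_α)·H(k σ_β σ_α / c(β)) and the mean admitted soft skill S(β) = ((1−α)/σ_α)·H(k σ_β σ_α / c(β)) are both strictly decreasing for β ∈ (0,α) and strictly increasing for β ∈ (α,1); in particular both attain their minimum over (0,1) at β = α. -/

import Mathlib

open MeasureTheory Real Set Filter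

/-- Standard normal pdf. -/
noncomputable def phi (x : ℝ) : ℝ := Real.exp (-x ^ 2 / 2) / Real.sqrt (2 * Real.pi)

/-- Standard normal cdf. -/
noncomputable def Phi (x : ℝ) : ℝ := ∫ y in Set.Iic x, phi y

/-- Standard normal hazard rate. -/
noncomputable def Haz (x : ℝ) : ℝ := phi x / (1 - Phi x)

/-!
The hazard rate `H = φ / (1 - Φ)` has derivative `φ (φ - x (1 - Φ)) / (1 - Φ)²`, which is positive
by the strict Mills inequality `x (1 - Φ x) < φ x`; so `T` and `S` move with `σ_β / c(β)`.
Comparing squares, `σ_{b₁}² c(b₂)² - σ_{b₂}² c(b₁)² = (b₂ - b₁) ((α - b₁) c(b₂) + (α - b₂) c(b₁))`,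
whose second factor has the sign of `α - b` when `b₁, b₂` lie on the same side of `α`.
-/

open ProbabilityTheory Topology

lemma phi_eq_gaussianPDFReal : phi = gaussianPDFReal 0 1 := by
  ext x
  simp [phi, gaussianPDFReal, div_eq_inv_mul]

lemma phi_pos (x : ℝ) : 0 < phi x :=
  phi_eq_gaussianPDFReal ▸ gaussianPDFReal_pos 0 1 x one_ne_zero

lemma integrable_phi : Integrable phi :=
  phi_eq_gaussianPDFReal ▸ integrable_gaussianPDFReal 0 1

lemma integral_phi : ∫ x, phi x = 1 :=
  phi_eq_gaussianPDFReal ▸ integral_gaussianPDFReal_eq_one 0 one_ne_zero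

lemma continuous_phi : Continuous phi := by
  unfold phi
  fun_prop

lemma hasDerivAt_phi (x : ℝ) : HasDerivAt phi (-x * phi x) x := by
  have h : HasDerivAt (fun x : ℝ => -x ^ 2 / 2) (-x) x := by
    exact ((hasDerivAt_pow 2 x).neg.div_const 2).congr_deriv (by ring)
  exact (h.exp.div_const _).congr_deriv (by simp only [phi]; ring)

lemma tendsto_phi_atTop : Tendsto phi atTop (𝓝 0) := by
  have h : Tendsto (fun x : ℝ => -x ^ 2 / 2) atTop atBot :=
    (tendsto_neg_atTop_atBot.comp (tendsto_pow_atTop two_ne_zero)).atBot_div_const two_pos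
  have h' := (tendsto_exp_atBot.comp h).div_const (√(2 * π))
  rwa [zero_div] at h'

lemma integrable_mul_phi : Integrable fun t => t * phi t :=
  ((integrable_mul_exp_neg_mul_sq (b := 1 / 2) one_half_pos).div_const (√(2 * π))).congr
    (.of_forall fun t => by simp only [phi]; ring_nf)

lemma setIntegral_Ioi_pos {f : ℝ → ℝ} {x : ℝ} (hf : IntegrableOn f (Ioi x))
    (hpos : ∀ t ∈ Ioi x, 0 < f t) : 0 < ∫ t in Ioi x, f t := by
  have hsupp : Function.support f ∩ Ioi x = Ioi x :=
    inter_eq_right.2 fun t ht => Function.mem_support.2 (hpos t ht).ne'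
  rw [setIntegral_pos_iff_support_of_nonneg_ae
    ((ae_restrict_iff' measurableSet_Ioi).2 (.of_forall fun t ht => (hpos t ht).le)) hf, hsupp]
  simp

lemma one_sub_Phi_eq_integral (x : ℝ) : 1 - Phi x = ∫ t in Ioi x, phi t := by
  rw [Phi, ← integral_phi, ← intervalIntegral.integral_Iic_add_Ioi integrable_phi.integrableOn
    integrable_phi.integrableOn, add_sub_cancel_left]

lemma one_sub_Phi_pos (x : ℝ) : 0 < 1 - Phi x :=
  one_sub_Phi_eq_integral x ▸ setIntegral_Ioi_pos integrable_phi.integrableOn fun t _ => phi_pos t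

lemma hasDerivAt_Phi (x : ℝ) : HasDerivAt Phi (phi x) x := by
  have hPhi : Phi = fun y => Phi 0 + ∫ t in (0 : ℝ)..y, phi t := by
    ext y
    rw [Phi, Phi, ← intervalIntegral.integral_Iic_sub_Iic integrable_phi.integrableOn
      integrable_phi.integrableOn, add_sub_cancel]
  rw [hPhi]
  exact (intervalIntegral.integral_hasDerivAt_right (integrable_phi.intervalIntegrable)
    (continuous_phi.stronglyMeasurableAtFilter _ _) continuous_phi.continuousAt).const_add _

lemma integral_Ioi_mul_phi (x : ℝ) : ∫ t in Ioi x, t * phi t = phi x := by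
  have h := integral_Ioi_of_hasDerivAt_of_tendsto' (a := x) (f := fun t => -phi t)
    (fun t _ => (hasDerivAt_phi t).neg.congr_deriv (by ring)) integrable_mul_phi.integrableOn
    tendsto_phi_atTop.neg
  simpa using h

-- `phi x - x (1 - Phi x) = ∫ t in Ioi x, (t - x) * phi t`, and the integrand is positive.
lemma mul_one_sub_Phi_lt_phi (x : ℝ) : x * (1 - Phi x) < phi x := by
  have hint : IntegrableOn (fun t => t * phi t - x * phi t) (Ioi x) :=
    (integrable_mul_phi.sub (integrable_phi.const_mul x)).integrableOn
  have hpos := setIntegral_Ioi_pos hint fun t (ht : x < t) => by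
    rw [← sub_mul]; exact mul_pos (sub_pos.2 ht) (phi_pos t)
  rw [integral_sub integrable_mul_phi.integrableOn (integrable_phi.const_mul x).integrableOn,
    integral_Ioi_mul_phi, integral_const_mul, ← one_sub_Phi_eq_integral] at hpos
  linarith

lemma hasDerivAt_Haz (x : ℝ) :
    HasDerivAt Haz (phi x * (phi x - x * (1 - Phi x)) / (1 - Phi x) ^ 2) x :=
  ((hasDerivAt_phi x).div ((hasDerivAt_const x 1).sub (hasDerivAt_Phi x))
    (one_sub_Phi_pos x).ne').congr_deriv (by simp only [Pi.sub_apply]; ring)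

theorem strictMono_Haz : StrictMono Haz :=
  strictMono_of_deriv_pos fun x => by
    have := sub_pos.2 (mul_one_sub_Phi_lt_phi x)
    have := phi_pos x
    have := one_sub_Phi_pos x
    rw [(hasDerivAt_Haz x).deriv]
    positivity

/-- `(a, 1 - a) ⬝ (b, 1 - b)`: the paper's `c(β)` is `weightInner α β` and `σ_β² = weightInner β β`. -/
def weightInner (a b : ℝ) : ℝ := a * b + (1 - a) * (1 - b)

/-- The paper's `σ_β / c(β)`. -/
noncomputable def ratio (α β : ℝ) : ℝ := √(weightInner β β) / weightInner α β

lemma weightInner_pos {a b : ℝ} (ha : a ∈ Ioo 0 1) (hb : b ∈ Icc 0 1) : 0 < weightInner a b := by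
  obtain ⟨ha0, ha1⟩ := ha
  obtain ⟨hb0, hb1⟩ := hb
  unfold weightInner
  rcases hb0.eq_or_lt with rfl | hb0
  · nlinarith
  · nlinarith [mul_nonneg (sub_nonneg.2 ha1.le) (sub_nonneg.2 hb1)]

lemma ratio_lt_ratio {α b₁ b₂ : ℝ} (h₁ : 0 < weightInner α b₁) (h₂ : 0 < weightInner α b₂)
    (h : (b₂ - b₁) * ((α - b₁) * weightInner α b₂ + (α - b₂) * weightInner α b₁) < 0) :
    ratio α b₁ < ratio α b₂ := by
  have hsq : weightInner b₁ b₁ * weightInner α b₂ ^ 2 - weightInner b₂ b₂ * weightInner α b₁ ^ 2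
      = (b₂ - b₁) * ((α - b₁) * weightInner α b₂ + (α - b₂) * weightInner α b₁) := by
    unfold weightInner; ring
  have hw : ∀ b, 0 ≤ weightInner b b := fun b => by
    unfold weightInner; nlinarith [sq_nonneg b, sq_nonneg (1 - b)]
  rw [ratio, ratio, div_lt_div_iff₀ h₁ h₂]
  refine lt_of_pow_lt_pow_left₀ 2 (by positivity) ?_
  rw [mul_pow, mul_pow, sq_sqrt (hw b₁), sq_sqrt (hw b₂)]
  linarith

lemma strictAntiOn_ratio {α : ℝ} (hα : α ∈ Ioo 0 1) : StrictAntiOn (ratio α) (Ioc 0 α) := by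
  rintro a ⟨ha0, haα⟩ b ⟨hb0, hbα⟩ hab
  have hca := weightInner_pos hα ⟨ha0.le, haα.trans hα.2.le⟩
  have hcb := weightInner_pos hα ⟨hb0.le, hbα.trans hα.2.le⟩
  refine ratio_lt_ratio hcb hca ?_
  nlinarith [mul_pos (sub_pos.2 hab) hcb, mul_nonneg (sub_nonneg.2 hbα) hca.le]

lemma strictMonoOn_ratio {α : ℝ} (hα : α ∈ Ioo 0 1) : StrictMonoOn (ratio α) (Ico α 1) := by
  rintro a ⟨hαa, ha1⟩ b ⟨hαb, hb1⟩ hab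
  have hca := weightInner_pos hα ⟨hα.1.le.trans hαa, ha1.le⟩
  have hcb := weightInner_pos hα ⟨hα.1.le.trans hαb, hb1.le⟩
  refine ratio_lt_ratio hca hcb ?_
  nlinarith [mul_pos (sub_pos.2 hab) hca, mul_nonneg (sub_nonneg.2 hαa) hcb.le]

lemma ratio_self_lt {α β : ℝ} (hα : α ∈ Ioo 0 1) (hβ : β ∈ Ioo 0 1) (hne : β ≠ α) :
    ratio α α < ratio α β := by
  rcases hne.lt_or_gt with hlt | hgt
  · exact strictAntiOn_ratio hα ⟨hβ.1, hlt.le⟩ ⟨hα.1, le_rfl⟩ hlt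
  · exact strictMonoOn_ratio hα ⟨le_rfl, hα.2⟩ ⟨hgt.le, hβ.2⟩ hgt

lemma StrictMono.comp_ratio {α : ℝ} (hα : α ∈ Ioo 0 1) {g F : ℝ → ℝ} (hg : StrictMono g)
    (hF : EqOn F (g ∘ ratio α) (Ioo 0 1)) :
    StrictAntiOn F (Ioo 0 α) ∧ StrictMonoOn F (Ioo α 1) ∧
      ∀ β ∈ Ioo (0 : ℝ) 1, β ≠ α → F α < F β := by
  refine ⟨(hg.comp_strictAntiOn ((strictAntiOn_ratio hα).mono Ioo_subset_Ioc_self)).congr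
      (hF.mono (Ioo_subset_Ioo_right hα.2.le)).symm,
    (hg.comp_strictMonoOn ((strictMonoOn_ratio hα).mono Ioo_subset_Ico_self)).congr
      (hF.mono (Ioo_subset_Ioo_left hα.1.le)).symm,
    fun β hβ hne => ?_⟩
  rw [hF hα, hF hβ]
  exact hg (ratio_self_lt hα hβ hne)

theorem stmt10_general (α σZ k : ℝ) (hα : α ∈ Set.Ioo (0 : ℝ) 1) (hk : 0 < k)
    (σα : ℝ) (hσα : σα = Real.sqrt (α ^ 2 + (1 - α) ^ 2 + σZ ^ 2))
    (σβ c T S : ℝ → ℝ)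
    (hσβ : ∀ β, σβ β = Real.sqrt (β ^ 2 + (1 - β) ^ 2))
    (hc : ∀ β, c β = α * β + (1 - α) * (1 - β))
    (hT : ∀ β, T β = α / σα * Haz (k * σβ β * σα / c β))
    (hS : ∀ β, S β = (1 - α) / σα * Haz (k * σβ β * σα / c β)) :
    StrictAntiOn T (Set.Ioo 0 α) ∧ StrictMonoOn T (Set.Ioo α 1) ∧
    StrictAntiOn S (Set.Ioo 0 α) ∧ StrictMonoOn S (Set.Ioo α 1) ∧
    (∀ β ∈ Set.Ioo (0 : ℝ) 1, β ≠ α → T α < T β ∧ S α < S β) := by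
  have hσα_pos : 0 < σα := hσα ▸ sqrt_pos.2 (by nlinarith [hα.1])
  have harg : ∀ β, k * σβ β * σα / c β = k * σα * ratio α β := fun β => by
    rw [hσβ, hc, ratio, weightInner, weightInner]
    ring_nf
  have hg : ∀ {a : ℝ}, 0 < a → StrictMono fun y => a * Haz (k * σα * y) := fun ha =>
    (strictMono_Haz.comp (strictMono_mul_left_of_pos (by positivity))).const_mul ha
  obtain ⟨hT₁, hT₂, hT₃⟩ := (hg (div_pos hα.1 hσα_pos)).comp_ratio hα (F := T)
    fun β _ => by simp only [hT, harg, Function.comp]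
  obtain ⟨hS₁, hS₂, hS₃⟩ := (hg (div_pos (sub_pos.2 hα.2) hσα_pos)).comp_ratio hα (F := S)
    fun β _ => by simp only [hS, harg, Function.comp]
  exact ⟨hT₁, hT₂, hS₁, hS₂, fun β hβ hne => ⟨hT₃ β hβ hne, hS₃ β hβ hne⟩⟩

theorem stmt10 (α σZ k : ℝ) (hα : α ∈ Set.Ioo (0 : ℝ) 1) (hσZ : 0 ≤ σZ) (hk : 0 < k)
    (σα : ℝ) (hσα : σα = Real.sqrt (α ^ 2 + (1 - α) ^ 2 + σZ ^ 2))
    (σβ c T S : ℝ → ℝ)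
    (hσβ : ∀ β, σβ β = Real.sqrt (β ^ 2 + (1 - β) ^ 2))
    (hc : ∀ β, c β = α * β + (1 - α) * (1 - β))
    (hT : ∀ β, T β = α / σα * Haz (k * σβ β * σα / c β))
    (hS : ∀ β, S β = (1 - α) / σα * Haz (k * σβ β * σα / c β)) :
    StrictAntiOn T (Set.Ioo 0 α) ∧ StrictMonoOn T (Set.Ioo α 1) ∧
    StrictAntiOn S (Set.Ioo 0 α) ∧ StrictMonoOn S (Set.Ioo α 1) ∧
    (∀ β ∈ Set.Ioo (0 : ℝ) 1, β ≠ α → T α < T β ∧ S α < S β) :=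
  stmt10_general α σZ k hα hk σα hσα σβ c T S hσβ hc hT hS
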